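/- arXiv:2502.02915 — 4 statements merged into one kernel-verified Lean document; each statement's English description precedes it below -/
import Mathlib

section
/- Let G be a graph, F a set of positively oriented edges of G, t ≥ 2, and α ∈ M_t(F). Then the number of circuits of length l on G whose abelianization mod t restricts to α on F equals (1/t^{|F|}) Σ_{γ ∈ M_t(F)} ε_t^{-⟨γ,α⟩} trace(W_{1,γ}^l). -/
open Finset Matrix

variable {V E : Type}

/-- Initial vertex of an oriented edge `(e, b)`; `b = true` means positively oriented. -/
def einit (vs vt : E → V) (a : E × Bool) : V := if a.2 then vs a.1 else vt a.1

/-- Terminal vertex of an oriented edge. -/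
def eterm (vs vt : E → V) (a : E × Bool) : V := if a.2 then vt a.1 else vs a.1

/-- Inverse (opposite) oriented edge. -/
def einv (a : E × Bool) : E × Bool := (a.1, !a.2)

/-- A closed walk of length `l` on the multigraph, recorded cyclically. -/
abbrev IsClosedWalk (vs vt : E → V) {l : ℕ} (a : ZMod l → E × Bool) : Prop :=
  ∀ i, eterm vs vt (a i) = einit vs vt (a (i + 1))

/-- A circuit: a closed walk without backtracks or tail. -/
abbrev IsCircuit (vs vt : E → V) {l : ℕ} (a : ZMod l → E × Bool) : Prop :=
  IsClosedWalk vs vt a ∧ ∀ i, a (i + 1) ≠ einv (a i)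

/-- The abelianization of a closed walk, as an integer vector over edges. -/
def abel [Fintype E] [DecidableEq E] {l : ℕ} [NeZero l]
    (a : ZMod l → E × Bool) (e : E) : ℤ :=
  ∑ i : ZMod l, if (a i).1 = e then (if (a i).2 then (1 : ℤ) else -1) else 0

/-- The vertex adjacency matrix (counting oriented edges from `v` to `w`). -/
def vertAdj [Fintype E] [DecidableEq V] (vs vt : E → V) : Matrix V V ℕ :=
  Matrix.of fun v w =>
    (univ.filter fun a : E × Bool => einit vs vt a = v ∧ eterm vs vt a = w).card

/-- Oriented edge `a` feeds into `b`. -/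
abbrev Feeds (vs vt : E → V) (a b : E × Bool) : Prop :=
  b ≠ einv a ∧ eterm vs vt a = einit vs vt b

/-- The edge adjacency matrix `W₁`. -/
def edgeAdj [DecidableEq V] [DecidableEq E] (vs vt : E → V) :
    Matrix (E × Bool) (E × Bool) ℕ :=
  Matrix.of fun a b => if Feeds vs vt a b then 1 else 0

/-- `ε_t = exp(2πi/t)`, a primitive `t`-th root of unity. -/
noncomputable def zetat (t : ℕ) : ℂ := Complex.exp (2 * Real.pi * Complex.I / t)

/-- The signed exponent `⟨γ, 1·e⟩` of an oriented edge. -/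
def oexp {t : ℕ} (γ : E → ZMod t) (a : E × Bool) : ℤ :=
  if a.2 then ((γ a.1).val : ℤ) else -((γ a.1).val : ℤ)

/-- The twisted vertex adjacency matrix `A_γ`. -/
noncomputable def twistedVertAdj [Fintype E] [DecidableEq V] (vs vt : E → V)
    (t : ℕ) (γ : E → ZMod t) : Matrix V V ℂ :=
  Matrix.of fun v w =>
    ∑ a : E × Bool, if einit vs vt a = v ∧ eterm vs vt a = w then zetat t ^ oexp γ a else 0

/-- The twisted edge adjacency matrix `W_{1,γ}`. -/
noncomputable def twistedEdgeAdj [DecidableEq V] [DecidableEq E] (vs vt : E → V)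
    (t : ℕ) (γ : E → ZMod t) : Matrix (E × Bool) (E × Bool) ℂ :=
  Matrix.of fun a b => if Feeds vs vt a b then zetat t ^ oexp γ a else 0

/-- The twisted vertex adjacency matrix for `t = 2`, with `±1` entries. -/
noncomputable def twistedVertAdj2 [Fintype E] [DecidableEq V] (vs vt : E → V)
    (γ : E → ZMod 2) : Matrix V V ℂ :=
  Matrix.of fun v w =>
    ∑ a : E × Bool, if einit vs vt a = v ∧ eterm vs vt a = w then (-1 : ℂ) ^ (γ a.1).val else 0

/-- Extension by zero of an element of `M_t(F)` to all edges. -/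
def extF [DecidableEq E] {t : ℕ} (F : Finset E) (γ : {e : E // e ∈ F} → ZMod t) (e : E) :
    ZMod t := if h : e ∈ F then γ ⟨e, h⟩ else 0

/-- Extension by zero of an element of `M_t(E^c(T))` to all edges. -/
def extC [DecidableEq E] {t : ℕ} (T : Finset E) (γ : {e : E // e ∉ T} → ZMod t) (e : E) :
    ZMod t := if h : e ∈ T then 0 else γ ⟨e, h⟩

/-- Reachability using only edges from the set `F` (edges traversable both ways). -/
def Reach (vs vt : E → V) (F : Finset E) : V → V → Prop :=
  Relation.ReflTransGen (fun v w => ∃ e ∈ F, (vs e = v ∧ vt e = w) ∨ (vs e = w ∧ vt e = v))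

/-- Degree of a vertex (loops counted twice). -/
def degree [Fintype E] [DecidableEq V] (vs vt : E → V) (v : V) : ℕ :=
  (univ.filter fun e => vs e = v).card + (univ.filter fun e => vt e = v).card

/-- `α` is an `R`-circulation: balanced at every vertex. -/
def IsCirc [Fintype E] [DecidableEq V] (vs vt : E → V) {R : Type} [AddCommMonoid R]
    (α : E → R) : Prop :=
  ∀ v, ∑ e ∈ univ.filter (fun e => vs e = v), α e = ∑ e ∈ univ.filter (fun e => vt e = v), α e

/-- `T` is a spanning tree: its edges connect all vertices and `|T| = |V| - 1`. -/
def IsSpanningTree [Fintype V] (vs vt : E → V) (T : Finset E) : Prop :=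
  (∀ v w : V, Reach vs vt T v w) ∧ T.card + 1 = Fintype.card V

/-- The vertex-edge incidence matrix. -/
def incidence (R : Type) [Ring R] [DecidableEq V] (vs vt : E → V) : Matrix V E R :=
  Matrix.of fun v e => (if vs e = v then (1 : R) else 0) - (if vt e = v then 1 else 0)

/-- An Eulerian circuit: a closed walk using every edge exactly once. -/
abbrev IsEulerianCircuit [Fintype E] (vs vt : E → V) (a : ZMod (Fintype.card E) → E × Bool) :
    Prop :=
  IsClosedWalk vs vt a ∧ Function.Bijective (fun i => (a i).1)

/-- Eulerian circuits up to cyclic rotation (Eulerian cycles). -/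
def eulSetoid [Fintype E] (vs vt : E → V) :
    Setoid {a : ZMod (Fintype.card E) → E × Bool // IsEulerianCircuit vs vt a} where
  r a b := ∃ k, ∀ i, b.1 i = a.1 (i + k)
  iseqv := by
    refine ⟨fun a => ⟨0, fun i => by rw [add_zero]⟩, ?_, ?_⟩
    · rintro a b ⟨k, h⟩
      exact ⟨-k, fun i => by rw [h (i + -k), neg_add_cancel_right]⟩
    · rintro a b c ⟨k, h⟩ ⟨k', h'⟩
      exact ⟨k' + k, fun i => by rw [h' i, h (i + k'), add_assoc]⟩

instance [Fintype E] [DecidableEq E] [DecidableEq V] [NeZero (Fintype.card E)]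
    (vs vt : E → V) : DecidableRel (eulSetoid vs vt).r :=
  fun a b => inferInstanceAs (Decidable (∃ k, ∀ i, b.1 i = a.1 (i + k)))

instance [Fintype E] [DecidableEq E] [DecidableEq V] [NeZero (Fintype.card E)]
    (vs vt : E → V) : Fintype (Quotient (eulSetoid vs vt)) :=
  @Quotient.fintype _ _ (eulSetoid vs vt)
    (fun a b => inferInstanceAs (Decidable (∃ k, ∀ i, b.1 i = a.1 (i + k))))

/-! Expanding `trace (W_{1,γ} ^ l)` entrywise gives a sum over closed walks of length `l` in which
the non-backtracking condition built into `W₁` kills every walk that is not a circuit, while the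
twist weights each circuit `C` by the character value `ε_t ^ ⟨γ, ab C⟩`. Averaging against
`ε_t ^ (-⟨γ, α⟩)` over all `γ ∈ M_t(F)` is orthogonality of the characters of `(ℤ/tℤ)^F`, which
detects `ab C = α` on `F`. -/

theorem AddChar.map_sum_eq_prod {ι A M : Type*} [AddCommMonoid A] [CommMonoid M]
    (ψ : AddChar A M) (s : Finset ι) (f : ι → A) : ψ (∑ i ∈ s, f i) = ∏ i ∈ s, ψ (f i) := by
  classical
  induction s using Finset.induction_on with
  | empty => simp
  | insert a s ha ih => rw [sum_insert ha, prod_insert ha, map_add_eq_mul, ih]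

theorem Fin.snoc_self_zero_succ {α : Type*} {m : ℕ} (b : Fin (m + 1) → α) (i : Fin (m + 1)) :
    (Fin.snoc b (b 0) : Fin (m + 2) → α) i.succ = b (i + 1) := by
  induction i using Fin.lastCases with
  | last => rw [Fin.succ_last, Fin.snoc_last, Fin.last_add_one]
  | cast j => rw [← Fin.castSucc_succ, Fin.snoc_castSucc, Fin.coeSucc_eq_succ]

namespace Matrix

variable {n R : Type*} [Fintype n] [DecidableEq n] [CommSemiring R]

theorem pow_succ_apply_eq_sum_prod (M : Matrix n n R) (k : ℕ) (x y : n) :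
    (M ^ (k + 1)) x y = ∑ p : Fin k → n,
      let v : Fin (k + 2) → n := Fin.cons x (Fin.snoc (α := fun _ => n) p y)
      ∏ i : Fin (k + 1), M (v i.castSucc) (v i.succ) := by
  induction k generalizing x with
  | zero => simp [Fin.snoc]
  | succ k ih =>
    rw [pow_succ', mul_apply, ← (Fin.consEquiv fun _ => n).sum_comp, Fintype.sum_prod_type]
    refine Finset.sum_congr rfl fun z _ => ?_
    rw [ih, Finset.mul_sum]
    refine Finset.sum_congr rfl fun p _ => ?_
    simp only [Fin.prod_univ_succ (n := k + 1), Fin.consEquiv, Equiv.coe_fn_mk,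
      ← Fin.cons_snoc_eq_snoc_cons]
    simp

theorem trace_pow_eq_sum_prod (M : Matrix n n R) (l : ℕ) [NeZero l] :
    trace (M ^ l) = ∑ b : ZMod l → n, ∏ i : ZMod l, M (b i) (b (i + 1)) := by
  obtain ⟨m, rfl⟩ : ∃ m, l = m + 1 := Nat.exists_eq_succ_of_ne_zero (NeZero.ne l)
  change ∑ x, (M ^ (m + 1)) x x = ∑ b : Fin (m + 1) → n, ∏ i : Fin (m + 1), M (b i) (b (i + 1))
  simp only [pow_succ_apply_eq_sum_prod]
  rw [← (Fin.consEquiv fun _ => n).sum_comp, Fintype.sum_prod_type]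
  refine Finset.sum_congr rfl fun x _ => Finset.sum_congr rfl fun p _ => ?_
  simp only [Fin.consEquiv, Equiv.coe_fn_mk, Fin.cons_snoc_eq_snoc_cons]
  refine Finset.prod_congr rfl fun i _ => ?_
  rw [Fin.snoc_castSucc]
  exact congrArg _ (Fin.snoc_self_zero_succ (Fin.cons x p : Fin (m + 1) → n) i)

end Matrix

open ZMod

section Characters

variable {t : ℕ} [NeZero t]

theorem zetat_zpow (k : ℤ) : zetat t ^ k = stdAddChar (k : ZMod t) := by
  rw [stdAddChar_coe, zetat, ← Complex.exp_int_mul]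
  ring_nf

theorem zetat_zpow_neg_val (x : ZMod t) : zetat t ^ (-(x.val : ℤ)) = stdAddChar (-x) := by
  rw [zetat_zpow]
  push_cast [natCast_val, cast_id]
  rfl

theorem sum_pi_stdAddChar_sum_mul {ι : Type*} [Fintype ι] [DecidableEq ι] (x : ι → ZMod t) :
    ∑ γ : ι → ZMod t, stdAddChar (∑ i, γ i * x i) =
      if x = 0 then (t : ℂ) ^ Fintype.card ι else 0 := by
  simp_rw [AddChar.map_sum_eq_prod]
  rw [← Fintype.prod_sum (fun i c => stdAddChar (c * x i))]
  simp_rw [AddChar.sum_mulShift _ (isPrimitive_stdAddChar t), ZMod.card, Nat.cast_ite,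
    Nat.cast_zero]
  rw [Fintype.prod_ite_zero, Finset.prod_const, Finset.card_univ]
  exact if_congr funext_iff.symm rfl rfl

end Characters

theorem sum_extF_mul {E : Type} [Fintype E] [DecidableEq E] {t : ℕ} (F : Finset E)
    (γ : {e : E // e ∈ F} → ZMod t) (x : E → ZMod t) :
    ∑ e, extF F γ e * x e = ∑ e : {e : E // e ∈ F}, γ e * x e := by
  rw [← Finset.sum_subset (subset_univ F) fun e _ he => by simp [extF, he], ← sum_coe_sort]
  simp [extF]

theorem sum_signed_eq_sum_mul_abel {E : Type} [Fintype E] [DecidableEq E] {t l : ℕ} [NeZero l]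
    (γ : E → ZMod t) (b : ZMod l → E × Bool) :
    ∑ i, (if (b i).2 then γ (b i).1 else -γ (b i).1) = ∑ e, γ e * (abel b e : ZMod t) := by
  simp only [abel, Int.cast_sum, Finset.mul_sum]
  rw [Finset.sum_comm]
  refine sum_congr rfl fun i _ => ?_
  cases (b i).2 <;> simp [apply_ite]

section TwistedWalks

variable {V E : Type} [DecidableEq V] [DecidableEq E] (vs vt : E → V) {t : ℕ} [NeZero t]

theorem twistedEdgeAdj_apply (γ : E → ZMod t) (a b : E × Bool) :
    twistedEdgeAdj vs vt t γ a b =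
      if Feeds vs vt a b then stdAddChar (if a.2 then γ a.1 else -γ a.1) else 0 := by
  simp only [twistedEdgeAdj, of_apply, zetat_zpow, oexp]
  split_ifs <;> simp

theorem prod_twistedEdgeAdj [Fintype E] {l : ℕ} [NeZero l] (γ : E → ZMod t)
    (b : ZMod l → E × Bool) :
    ∏ i, twistedEdgeAdj vs vt t γ (b i) (b (i + 1)) =
      if IsCircuit vs vt b then stdAddChar (∑ e, γ e * (abel b e : ZMod t)) else 0 := by
  simp_rw [twistedEdgeAdj_apply, Fintype.prod_ite_zero, ← AddChar.map_sum_eq_prod,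
    sum_signed_eq_sum_mul_abel]
  exact if_congr ⟨fun h => ⟨fun i => (h i).2, fun i => (h i).1⟩, fun h i => ⟨h.2 i, h.1 i⟩⟩
    rfl rfl

theorem trace_twistedEdgeAdj_pow [Fintype E] (γ : E → ZMod t) (l : ℕ) [NeZero l] :
    trace (twistedEdgeAdj vs vt t γ ^ l) = ∑ b : ZMod l → E × Bool,
      if IsCircuit vs vt b then stdAddChar (∑ e, γ e * (abel b e : ZMod t)) else 0 := by
  simp_rw [trace_pow_eq_sum_prod, prod_twistedEdgeAdj]

end TwistedWalks

theorem stmt7_general {V E : Type} [Fintype E] [DecidableEq V] [DecidableEq E]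
    (vs vt : E → V) (t : ℕ) [NeZero t]
    (F : Finset E) (α : {e : E // e ∈ F} → ZMod t) (l : ℕ) [NeZero l] :
    (Fintype.card {a : ZMod l → E × Bool // IsCircuit vs vt a ∧
        (fun e : {e : E // e ∈ F} => ((abel a e.1 : ℤ) : ZMod t)) = α} : ℂ) =
      (1 / (t : ℂ) ^ F.card) *
        ∑ γ : {e : E // e ∈ F} → ZMod t,
          zetat t ^ (-(((∑ e : {e : E // e ∈ F}, γ e * α e).val : ℤ))) *
            Matrix.trace ((twistedEdgeAdj vs vt t (extF F γ)) ^ l) := by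
  set abelF : (ZMod l → E × Bool) → {e : E // e ∈ F} → ZMod t :=
    fun a e => ((abel a e.1 : ℤ) : ZMod t)
  have htF : (t : ℂ) ^ F.card ≠ 0 := pow_ne_zero _ (Nat.cast_ne_zero.mpr (NeZero.ne t))
  calc (Fintype.card {a // IsCircuit vs vt a ∧ abelF a = α} : ℂ)
      = ∑ b : ZMod l → E × Bool, if IsCircuit vs vt b then
          1 / (t : ℂ) ^ F.card * (if abelF b - α = 0 then (t : ℂ) ^ F.card else 0) else 0 := by
        rw [Fintype.card_subtype, Finset.card_filter, Nat.cast_sum]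
        refine sum_congr rfl fun b _ => ?_
        by_cases hb : IsCircuit vs vt b <;> by_cases hα : abelF b = α <;>
          simp [hb, hα, sub_eq_zero, htF]
    _ = ∑ b : ZMod l → E × Bool, if IsCircuit vs vt b then
          1 / (t : ℂ) ^ F.card * ∑ γ : {e : E // e ∈ F} → ZMod t,
            stdAddChar (∑ e, γ e * (abelF b - α) e) else 0 := by
        simp_rw [sum_pi_stdAddChar_sum_mul, Fintype.card_coe]
    _ = _ := by
        simp_rw [trace_twistedEdgeAdj_pow, sum_extF_mul, Finset.mul_sum, mul_ite, mul_zero]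
        rw [Finset.sum_comm]
        refine sum_congr rfl fun b _ => ?_
        split_ifs
        · refine sum_congr rfl fun γ _ => ?_
          rw [zetat_zpow_neg_val, ← AddChar.map_add_eq_mul]
          congr 2
          simp only [abelF, Pi.sub_apply, mul_sub, sum_sub_distrib]
          ring
        · simp

theorem stmt7 {V E : Type} [Fintype V] [Fintype E] [DecidableEq V] [DecidableEq E]
    (vs vt : E → V) (t : ℕ) [NeZero t] (ht : 2 ≤ t)
    (F : Finset E) (α : {e : E // e ∈ F} → ZMod t) (l : ℕ) [NeZero l] :
    (Fintype.card {a : ZMod l → E × Bool // IsCircuit vs vt a ∧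
        (fun e : {e : E // e ∈ F} => ((abel a e.1 : ℤ) : ZMod t)) = α} : ℂ) =
      (1 / (t : ℂ) ^ F.card) *
        ∑ γ : {e : E // e ∈ F} → ZMod t,
          zetat t ^ (-(((∑ e : {e : E // e ∈ F}, γ e * α e).val : ℤ))) *
            Matrix.trace ((twistedEdgeAdj vs vt t (extF F γ)) ^ l) :=
  stmt7_general vs vt t F α l
end

section
/- A connected finite multigraph G is Eulerian if and only if G is bridgeless and the element ρ_T^{-1}(𝟙_T) ∈ H₁(G,ℤ/2ℤ) is the same for all spanning trees T of G. -/
open Finset Matrix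

variable {V E : Type}

/-!
Even degrees rule out a cut consisting of a single edge (sum the degrees over one side mod 2),
so an even graph is bridgeless and the all-ones vector is a `ℤ/2`-circulation equal to `𝟙_T` on
every cotree. Conversely, in a bridgeless graph each edge `e` misses a spanning tree of `G ∖ e`,
so a circulation restricting to `𝟙_T` for all `T` is all-ones, which forces even degrees.
-/

namespace Reach

variable {vs vt : E → V} {F : Finset E} {u v w : V}

lemma symm (h : Reach vs vt F v w) : Reach vs vt F w v :=
  Relation.reflTransGen_swap.1 <|
    Relation.ReflTransGen.mono (fun _ _ ⟨e, he, hends⟩ => ⟨e, he, hends.symm⟩) _ _ h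

lemma trans (h : Reach vs vt F u v) (h' : Reach vs vt F v w) : Reach vs vt F u w :=
  Relation.ReflTransGen.trans h h'

lemma of_mem {e : E} (he : e ∈ F) : Reach vs vt F (vs e) (vt e) :=
  Relation.ReflTransGen.single ⟨e, he, Or.inl ⟨rfl, rfl⟩⟩

lemma of_sym2_eq {e : E} (he : e ∈ F) (hends : s(vs e, vt e) = s(v, w)) :
    Reach vs vt F v w :=
  Relation.ReflTransGen.single ⟨e, he, Sym2.eq_iff.1 hends⟩

lemma erase_of_reach_erase [DecidableEq E] {e : E} (hends : Reach vs vt (F.erase e) (vs e) (vt e))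
    (h : Reach vs vt F v w) : Reach vs vt (F.erase e) v w := by
  refine Relation.reflTransGen_closed (fun a b ⟨e', he', hab⟩ => ?_) _ _ h
  by_cases hee : e' = e
  · subst hee
    rcases hab with ⟨rfl, rfl⟩ | ⟨rfl, rfl⟩
    exacts [hends, hends.symm]
  · exact Relation.ReflTransGen.single ⟨e', mem_erase.2 ⟨hee, he'⟩, hab⟩

end Reach

/-- Loops are dropped and parallel edges merged. -/
def edgeGraph (vs vt : E → V) (F : Finset E) : SimpleGraph V :=
  SimpleGraph.fromEdgeSet ((fun e => s(vs e, vt e)) '' F)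

lemma Reach.reachable_edgeGraph {vs vt : E → V} {F : Finset E} {v w : V}
    (h : Reach vs vt F v w) : (edgeGraph vs vt F).Reachable v w := by
  rw [SimpleGraph.reachable_iff_reflTransGen]
  refine Relation.reflTransGen_closed (fun a b ⟨e, he, hab⟩ => ?_) _ _ h
  by_cases hne : a = b
  · exact hne ▸ Relation.ReflTransGen.refl
  · refine Relation.ReflTransGen.single ((SimpleGraph.fromEdgeSet_adj _).2 ⟨⟨e, he, ?_⟩, hne⟩)
    exact Sym2.eq_iff.2 hab

/-- A spanning tree of the simple graph `edgeGraph vs vt F` lifts edge by edge to a spanning tree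
of the multigraph inside `F`. -/
lemma exists_isSpanningTree_subset [Fintype V] [Nonempty V] {vs vt : E → V} {F : Finset E}
    (hF : ∀ v w, Reach vs vt F v w) : ∃ T ⊆ F, IsSpanningTree vs vt T := by
  classical
  have hconn : (edgeGraph vs vt F).Connected :=
    (SimpleGraph.connected_iff _).2 ⟨fun v w => (hF v w).reachable_edgeGraph, inferInstance⟩
  obtain ⟨H, hHle, hH⟩ := hconn.exists_isTree_le
  have hlift : ∀ s : H.edgeSet, ∃ e ∈ F, s(vs e, vt e) = s.1 := by
    intro s
    have hs := SimpleGraph.edgeSet_mono hHle s.2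
    rw [edgeGraph, SimpleGraph.edgeSet_fromEdgeSet] at hs
    exact hs.1
  choose lift hliftF hliftEnds using hlift
  have hinj : Function.Injective lift := fun s s' h =>
    Subtype.ext ((hliftEnds s).symm.trans (h ▸ hliftEnds s'))
  refine ⟨univ.image lift, by simpa [Finset.image_subset_iff] using hliftF, fun v w => ?_, ?_⟩
  · have hvw := (SimpleGraph.reachable_iff_reflTransGen v w).1 (hH.connected v w)
    refine Relation.reflTransGen_closed (fun a b hab => ?_) _ _ hvw
    exact Reach.of_sym2_eq (mem_image_of_mem lift (mem_univ ⟨s(a, b), hab⟩))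
      (hliftEnds ⟨s(a, b), hab⟩)
  · rw [card_image_of_injective _ hinj, card_univ, ← SimpleGraph.edgeFinset_card]
    exact hH.card_edgeFinset

section Parity

variable [Fintype E] [DecidableEq V] {vs vt : E → V}

/-- Summing degrees over `S` counts each edge once for every endpoint in `S`. -/
lemma mem_iff_mem_of_even_degree (heven : ∀ v, Even (degree vs vt v)) (S : Finset V) (e : E)
    (hS : ∀ e' ≠ e, (vs e' ∈ S ↔ vt e' ∈ S)) : (vs e ∈ S ↔ vt e ∈ S) := by
  set f : E → ZMod 2 := fun e' => (if vs e' ∈ S then 1 else 0) + (if vt e' ∈ S then 1 else 0)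
  have hf : ∀ e', f e' = 0 ↔ (vs e' ∈ S ↔ vt e' ∈ S) := by
    intro e'
    by_cases hs : vs e' ∈ S <;> by_cases ht : vt e' ∈ S <;> simp [f, hs, ht]; decide
  have hsum : ∑ e', f e' = ∑ v ∈ S, (degree vs vt v : ZMod 2) := by
    simp only [f, degree, Nat.cast_add, natCast_card_filter, sum_add_distrib]
    rw [sum_comm (s := S), sum_comm (s := S)]
    simp only [sum_ite_eq]
  have hdeg : ∑ v ∈ S, (degree vs vt v : ZMod 2) = 0 :=
    sum_eq_zero fun v _ => ZMod.natCast_eq_zero_iff_even.2 (heven v)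
  rw [← hf, ← hdeg, ← hsum, sum_eq_single e (fun e' _ he' => (hf e').2 (hS e' he'))
    (fun h => absurd (mem_univ e) h)]

lemma bridgeless_of_even_degree [Fintype V] [DecidableEq E] (heven : ∀ v, Even (degree vs vt v))
    (hconn : ∀ v w : V, Reach vs vt univ v w) (e : E) (v w : V) :
    Reach vs vt (univ.erase e) v w := by
  classical
  set S : Finset V := univ.filter (Reach vs vt (univ.erase e) (vs e))
  have hmemS : ∀ z, z ∈ S ↔ Reach vs vt (univ.erase e) (vs e) z := by simp [S]
  have hcut : ∀ e' ≠ e, (vs e' ∈ S ↔ vt e' ∈ S) := by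
    intro e' he'
    have hedge : Reach vs vt (univ.erase e) (vs e') (vt e') := Reach.of_mem (by simpa using he')
    rw [hmemS, hmemS]
    exact ⟨fun h => h.trans hedge, fun h => h.trans hedge.symm⟩
  have hends := (hmemS _).1 ((mem_iff_mem_of_even_degree heven S e hcut).1
    ((hmemS _).2 Relation.ReflTransGen.refl))
  exact Reach.erase_of_reach_erase hends (hconn v w)

lemma isCirc_one_iff_even_degree :
    IsCirc vs vt (fun _ => (1 : ZMod 2)) ↔ ∀ v, Even (degree vs vt v) := by
  refine forall_congr' fun v => ?_
  simp only [sum_const, nsmul_eq_mul, mul_one, ZMod.natCast_eq_natCast_iff' _ _ 2, degree,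
    Nat.even_iff]
  omega

end Parity

theorem stmt12 {V E : Type} [Fintype V] [Fintype E] [DecidableEq V] [DecidableEq E]
    (vs vt : E → V) (hconn : ∀ v w : V, Reach vs vt Finset.univ v w) :
    (∀ v, Even (degree vs vt v)) ↔
      ((∀ e : E, ∀ v w : V, Reach vs vt (Finset.univ.erase e) v w) ∧
        ∃ α : E → ZMod 2, IsCirc vs vt α ∧
          ∀ T : Finset E, IsSpanningTree vs vt T → ∀ e ∉ T, α e = 1) := by
  constructor
  · intro heven
    exact ⟨bridgeless_of_even_degree heven hconn, fun _ => 1,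
      isCirc_one_iff_even_degree.2 heven, fun _ _ _ _ => rfl⟩
  · rintro ⟨hbridgeless, α, hcirc, hα⟩
    have hα_one : α = fun _ => 1 := by
      funext e
      have : Nonempty V := ⟨vs e⟩
      obtain ⟨T, hTsub, hT⟩ := exists_isSpanningTree_subset (hbridgeless e)
      exact hα T hT e fun heT => notMem_erase e univ (hTsub heT)
    exact isCirc_one_iff_even_degree.1 (hα_one ▸ hcirc)
end

section
/- Let G be a connected graph with spanning tree T and canonical element γ_T ∈ M₂(E^c(T)). Then the graph G' obtained from G by deleting the edges in supp(γ_T) is the maximal bipartite subgraph of G containing T: G' is bipartite, and any bipartite subgraph of G containing all edges of T is a subgraph of G'. -/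
/-!
Two proper 2-colourings `b`, `c` of a connected spanning subgraph `T` differ by a constant:
`b + c` takes equal values at the ends of every tree edge, hence everywhere. So `b` and `c`
separate exactly the same edges of `G`. The edges separated by the colouring `c` of `T` are
those off `supp γ_T`, and any bipartite `F ⊇ T` has a colouring `b` separating all of `F`.
-/

open Finset Matrix

variable {V E : Type}

def IsTwoColoring (vs vt : E → V) (F : Finset E) (b : V → ZMod 2) : Prop :=
  ∀ e ∈ F, b (vs e) ≠ b (vt e)

theorem Reach.apply_eq {α : Type} {vs vt : E → V} {F : Finset E} {f : V → α}
    (hf : ∀ e ∈ F, f (vs e) = f (vt e)) {v w : V} (h : Reach vs vt F v w) : f v = f w := by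
  induction h with
  | refl => rfl
  | tail _ hstep ih =>
    obtain ⟨e, he, ⟨rfl, rfl⟩ | ⟨rfl, rfl⟩⟩ := hstep
    · exact ih.trans (hf e he)
    · exact ih.trans (hf e he).symm

theorem ZMod.two_add_eq_add_of_ne {x y x' y' : ZMod 2} (h : x ≠ y) (h' : x' ≠ y') :
    x + x' = y + y' := by
  revert x y x' y'
  decide

theorem IsTwoColoring.ne_iff_ne {vs vt : E → V} {F : Finset E}
    (hF : ∀ v w, Reach vs vt F v w) {b c : V → ZMod 2}
    (hb : IsTwoColoring vs vt F b) (hc : IsTwoColoring vs vt F c) (e : E) :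
    b (vs e) ≠ b (vt e) ↔ c (vs e) ≠ c (vt e) := by
  have hsum : b (vs e) + c (vs e) = b (vt e) + c (vt e) :=
    Reach.apply_eq (f := b + c)
      (fun e he => ZMod.two_add_eq_add_of_ne (hb e he) (hc e he)) (hF _ _)
  refine not_congr ⟨fun h => ?_, fun h => ?_⟩
  · rw [h] at hsum
    exact add_left_cancel hsum
  · rw [h] at hsum
    exact add_right_cancel hsum

theorem stmt16_general {V E : Type} [Fintype V] [Fintype E] [DecidableEq E]
    (vs vt : E → V) (T : Finset E) (hT : IsSpanningTree vs vt T)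
    (c : V → ZMod 2) (hc : ∀ e ∈ T, c (vs e) ≠ c (vt e)) :
    (∃ b : V → ZMod 2, ∀ e ∈ Finset.univ.filter
        (fun e : E => e ∈ T ∨ c (vs e) ≠ c (vt e)), b (vs e) ≠ b (vt e)) ∧
      ∀ F : Finset E, T ⊆ F → (∃ b : V → ZMod 2, ∀ e ∈ F, b (vs e) ≠ b (vt e)) →
        F ⊆ Finset.univ.filter (fun e : E => e ∈ T ∨ c (vs e) ≠ c (vt e)) := by
  refine ⟨⟨c, fun e he => (mem_filter.1 he).2.elim (hc e) id⟩, ?_⟩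
  rintro F hTF ⟨b, hb⟩ e he
  have hbT : IsTwoColoring vs vt T b := fun e he => hb e (hTF he)
  exact mem_filter.2 ⟨mem_univ e, Or.inr ((hbT.ne_iff_ne hT.1 hc e).1 (hb e he))⟩

theorem stmt16 {V E : Type} [Fintype V] [Fintype E] [DecidableEq V] [DecidableEq E]
    (vs vt : E → V) (T : Finset E) (hT : IsSpanningTree vs vt T)
    (c : V → ZMod 2) (hc : ∀ e ∈ T, c (vs e) ≠ c (vt e)) :
    (∃ b : V → ZMod 2, ∀ e ∈ Finset.univ.filter
        (fun e : E => e ∈ T ∨ c (vs e) ≠ c (vt e)), b (vs e) ≠ b (vt e)) ∧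
      ∀ F : Finset E, T ⊆ F → (∃ b : V → ZMod 2, ∀ e ∈ F, b (vs e) ≠ b (vt e)) →
        F ⊆ Finset.univ.filter (fun e : E => e ∈ T ∨ c (vs e) ≠ c (vt e)) :=
  stmt16_general vs vt T hT c hc
end

section
/- Let G be an Eulerian graph (every vertex has even degree) with m edges, T a spanning tree, and γ_T the canonical element of M₂(E^c(T)). Then |supp(γ_T)| ≡ m (mod 2). -/
open Finset Matrix

variable {V E : Type}

/-!
Colour the vertices by the bipartition class `c` of the spanning tree; then `supp(γ_T)` is the
set of monochromatic edges, as every tree edge is bichromatic. The bichromatic edges form the cut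
between the two colour classes, and when all degrees are even every cut has even size: modulo 2
its size is `∑_e (c(vs e) + c(vt e)) = ∑_v deg(v) c(v)`.
-/

section

variable [Fintype V] [Fintype E] [DecidableEq V]

theorem sum_degree_mul {R : Type} [CommSemiring R] (vs vt : E → V) (f : V → R) :
    ∑ v, (degree vs vt v : R) * f v = ∑ e, (f (vs e) + f (vt e)) := by
  have fiber : ∀ g : E → V, ∑ e, f (g e) = ∑ v, (#{e | g e = v} : R) * f v := fun g => by
    rw [← sum_fiberwise univ g (fun e => f (g e))]
    refine sum_congr rfl fun v _ => ?_
    rw [sum_congr rfl fun e he => by rw [(mem_filter.mp he).2], sum_const, nsmul_eq_mul]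
  simp only [sum_add_distrib, fiber, degree, Nat.cast_add, add_mul]

theorem even_card_filter_ne_of_even_degree (vs vt : E → V)
    (hEul : ∀ v, Even (degree vs vt v)) (c : V → ZMod 2) :
    Even #{e | c (vs e) ≠ c (vt e)} := by
  have hne_iff : ∀ a b : ZMod 2, (if a ≠ b then 1 else 0) = a + b := by decide
  rw [← ZMod.natCast_eq_zero_iff_even, card_filter, Nat.cast_sum]
  simp only [Nat.cast_ite, Nat.cast_one, Nat.cast_zero, hne_iff, ← sum_degree_mul]
  exact sum_eq_zero fun v _ => by
    rw [(ZMod.natCast_eq_zero_iff_even).mpr (hEul v), zero_mul]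

end

theorem stmt17_general {V E : Type} [Fintype V] [Fintype E] [DecidableEq V] [DecidableEq E]
    (vs vt : E → V) (hEul : ∀ v, Even (degree vs vt v))
    (T : Finset E)
    (c : V → ZMod 2) (hc : ∀ e ∈ T, c (vs e) ≠ c (vt e)) :
    (Finset.univ.filter fun e : E => e ∉ T ∧ c (vs e) = c (vt e)).card ≡
      Fintype.card E [MOD 2] := by
  have hmono : (univ.filter fun e : E => e ∉ T ∧ c (vs e) = c (vt e)) =
      univ.filter fun e => c (vs e) = c (vt e) :=
    filter_congr fun e _ => and_iff_right_of_imp fun h he => hc e he h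
  obtain ⟨k, hk⟩ := even_card_filter_ne_of_even_degree vs vt hEul c
  rw [hmono, Fintype.card, ← card_filter_add_card_filter_not (s := univ)
    (fun e => c (vs e) = c (vt e)), hk]
  unfold Nat.ModEq
  omega

theorem stmt17 {V E : Type} [Fintype V] [Fintype E] [DecidableEq V] [DecidableEq E]
    (vs vt : E → V) (hEul : ∀ v, Even (degree vs vt v))
    (T : Finset E) (hT : IsSpanningTree vs vt T)
    (c : V → ZMod 2) (hc : ∀ e ∈ T, c (vs e) ≠ c (vt e)) :
    (Finset.univ.filter fun e : E => e ∉ T ∧ c (vs e) = c (vt e)).card ≡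
      Fintype.card E [MOD 2] :=
  stmt17_general vs vt hEul T c hc
end
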